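/- Let R be a commutative topological ring such that (i) the open two-sided ideals form a basis of neighbourhoods of 0, (ii) the natural map R → lim_{I open ideal} R/I is an isomorphism, and (iii) the Jacobson radical Jac(R) is open. Then the natural group homomorphism R^× → lim_{I open ideal} (R/I)^× is an isomorphism. -/

import Mathlib

/-!
`Rˣ` is cut out of `R × R` by the equations `r * s = 1 = s * r`, so forming units commutes
with limits. Concretely, a compatible family of units `x I` lifts by completeness to some `r`,
the family of inverses to some `s`, and `r * s = 1 = s * r` holds because it holds modulo
every open ideal.
-/

section JointlyInjective

variable {R ι : Type*} [Ring R] {S : ι → Type*} [∀ i, Ring (S i)] (f : ∀ i, R →+* S i)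

theorem eq_of_forall_ringHom_eq (hf : ∀ r, (∀ i, f i r = 0) → r = 0) {a b : R}
    (h : ∀ i, f i a = f i b) : a = b :=
  sub_eq_zero.mp <| hf _ fun i => by rw [map_sub, h, sub_self]

theorem Units.eq_of_forall_map_eq (hf : ∀ r, (∀ i, f i r = 0) → r = 0) {u v : Rˣ}
    (h : ∀ i, Units.map (f i).toMonoidHom u = Units.map (f i).toMonoidHom v) : u = v :=
  Units.ext <| eq_of_forall_ringHom_eq f hf fun i => congrArg Units.val (h i)

theorem Units.exists_map_eq_of_lifts (hf : ∀ r, (∀ i, f i r = 0) → r = 0) (x : ∀ i, (S i)ˣ) {r s : R}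
    (hr : ∀ i, f i r = x i) (hs : ∀ i, f i s = ↑(x i)⁻¹) :
    ∃ u : Rˣ, ∀ i, Units.map (f i).toMonoidHom u = x i := by
  have hrs : r * s = 1 :=
    eq_of_forall_ringHom_eq f hf fun i => by rw [map_mul, map_one, hr, hs, Units.mul_inv]
  have hsr : s * r = 1 :=
    eq_of_forall_ringHom_eq f hf fun i => by rw [map_mul, map_one, hr, hs, Units.inv_mul]
  exact ⟨⟨r, s, hrs, hsr⟩, fun i => Units.ext (hr i)⟩

end JointlyInjective

theorem stmt12_general (R : Type*) [CommRing R] [TopologicalSpace R]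
    (hinj : ∀ r : R,
      (∀ I : Ideal R, IsOpen (I : Set R) → Ideal.Quotient.mk I r = 0) → r = 0)
    (hsurj : ∀ x : ∀ I : {I : Ideal R // IsOpen (I : Set R)}, R ⧸ I.1,
      (∀ (I J : {I : Ideal R // IsOpen (I : Set R)}) (h : I.1 ≤ J.1),
        Ideal.Quotient.factor (S := I.1) (T := J.1) h (x I) = x J) →
      ∃ r : R, ∀ I : {I : Ideal R // IsOpen (I : Set R)}, Ideal.Quotient.mk I.1 r = x I) :
    (∀ u v : Rˣ,
      (∀ I : Ideal R, IsOpen (I : Set R) →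
        Units.map (Ideal.Quotient.mk I).toMonoidHom u =
          Units.map (Ideal.Quotient.mk I).toMonoidHom v) → u = v) ∧
    ∀ x : ∀ I : {I : Ideal R // IsOpen (I : Set R)}, (R ⧸ I.1)ˣ,
      (∀ (I J : {I : Ideal R // IsOpen (I : Set R)}) (h : I.1 ≤ J.1),
        Units.map (Ideal.Quotient.factor (S := I.1) (T := J.1) h).toMonoidHom (x I) = x J) →
      ∃ u : Rˣ, ∀ I : {I : Ideal R // IsOpen (I : Set R)},
        Units.map (Ideal.Quotient.mk I.1).toMonoidHom u = x I := by
  let f (I : {I : Ideal R // IsOpen (I : Set R)}) : R →+* R ⧸ I.1 := Ideal.Quotient.mk I.1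
  have hf : ∀ r, (∀ I, f I r = 0) → r = 0 := fun r h => hinj r fun I hI => h ⟨I, hI⟩
  refine ⟨fun u v h => Units.eq_of_forall_map_eq f hf fun I => h I.1 I.2, fun x hx => ?_⟩
  obtain ⟨r, hr⟩ := hsurj (fun I => x I) fun I J h => congrArg Units.val (hx I J h)
  obtain ⟨s, hs⟩ := hsurj (fun I => ↑(x I)⁻¹) fun I J h => by
    rw [← hx I J h, ← map_inv]; rfl
  exact Units.exists_map_eq_of_lifts f hf x hr hs

/-- Let `R` be a commutative topological ring whose open ideals form a basis
of neighbourhoods of `0`, which is complete (`R ≅ lim R/I` over open ideals `I`), and whose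
Jacobson radical is open. Then `R^× → lim (R/I)^×` is an isomorphism (injective and
surjective onto compatible families of units). -/
theorem stmt12 (R : Type*) [CommRing R] [TopologicalSpace R] [IsTopologicalRing R]
    (hbasis : ∀ s ∈ nhds (0 : R), ∃ I : Ideal R, IsOpen (I : Set R) ∧ (I : Set R) ⊆ s)
    (hinj : ∀ r : R,
      (∀ I : Ideal R, IsOpen (I : Set R) → Ideal.Quotient.mk I r = 0) → r = 0)
    (hsurj : ∀ x : ∀ I : {I : Ideal R // IsOpen (I : Set R)}, R ⧸ I.1,
      (∀ (I J : {I : Ideal R // IsOpen (I : Set R)}) (h : I.1 ≤ J.1),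
        Ideal.Quotient.factor (S := I.1) (T := J.1) h (x I) = x J) →
      ∃ r : R, ∀ I : {I : Ideal R // IsOpen (I : Set R)}, Ideal.Quotient.mk I.1 r = x I)
    (hjac : IsOpen ((Ideal.jacobson (⊥ : Ideal R) : Ideal R) : Set R)) :
    (∀ u v : Rˣ,
      (∀ I : Ideal R, IsOpen (I : Set R) →
        Units.map (Ideal.Quotient.mk I).toMonoidHom u =
          Units.map (Ideal.Quotient.mk I).toMonoidHom v) → u = v) ∧
    ∀ x : ∀ I : {I : Ideal R // IsOpen (I : Set R)}, (R ⧸ I.1)ˣ,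
      (∀ (I J : {I : Ideal R // IsOpen (I : Set R)}) (h : I.1 ≤ J.1),
        Units.map (Ideal.Quotient.factor (S := I.1) (T := J.1) h).toMonoidHom (x I) = x J) →
      ∃ u : Rˣ, ∀ I : {I : Ideal R // IsOpen (I : Set R)},
        Units.map (Ideal.Quotient.mk I.1).toMonoidHom u = x I :=
  stmt12_general R hinj hsurj
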